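/- If a finite tournament has at least two distinct kings, then it has at least three distinct kings. -/

import Mathlib

def IsTournament {V : Type*} (r : V → V → Prop) : Prop :=
  (∀ v, ¬ r v v) ∧ ∀ u v : V, u ≠ v → (r u v ↔ ¬ r v u)

def IsKing {V : Type*} (r : V → V → Prop) (v : V) : Prop :=
  ∀ u : V, u ≠ v → r v u ∨ ∃ w, r v w ∧ r w u

/-!
A vertex of maximal out-degree is a king: if `v` reached `u` in no way, then `u` beats `v` and
everything `v` beats, so `u` would have larger out-degree. Applied to the subtournament on the
in-neighbourhood of a vertex `v`, this gives a king of that subtournament, which is a king of the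
whole tournament since it reaches every other vertex through `v`. Now if `k₁ → k₂`, the king `k₂`
reaches `k₁` in two steps, so `k₁` has an in-neighbour; a king beating `k₁` is then neither `k₁`
nor `k₂`.
-/

namespace IsTournament

variable {V : Type*} {r : V → V → Prop}

theorem irrefl (hT : IsTournament r) (v : V) : ¬ r v v := hT.1 v

theorem asymm (hT : IsTournament r) {u v : V} (h : r u v) : ¬ r v u := by
  have huv : u ≠ v := by rintro rfl; exact hT.irrefl u h
  exact (hT.2 u v huv).mp h

theorem rel_of_not_rel (hT : IsTournament r) {u v : V} (huv : u ≠ v) (h : ¬ r u v) : r v u :=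
  (hT.2 v u huv.symm).mpr h

theorem comap {W : Type*} (hT : IsTournament r) {f : W → V} (hf : Function.Injective f) :
    IsTournament (fun a b => r (f a) (f b)) :=
  ⟨fun a => hT.irrefl (f a), fun a b hab => hT.2 (f a) (f b) (hf.ne hab)⟩

theorem exists_isKing [Finite V] [Nonempty V] (hT : IsTournament r) : ∃ v, IsKing r v := by
  classical
  have := Fintype.ofFinite V
  obtain ⟨v, hmax⟩ := Finite.exists_max fun v => (Finset.univ.filter (r v)).card
  refine ⟨v, fun u huv => ?_⟩
  by_contra! h
  obtain ⟨hvu, hno_path⟩ := h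
  have hsub : Finset.univ.filter (r v) ⊂ Finset.univ.filter (r u) := by
    refine Finset.ssubset_iff_of_subset (fun w hw => ?_) |>.mpr ⟨v, ?_, ?_⟩
    · simp only [Finset.mem_filter, Finset.mem_univ, true_and] at hw ⊢
      have hwu : w ≠ u := by rintro rfl; exact hvu hw
      exact hT.rel_of_not_rel hwu (hno_path w hw)
    · simpa using hT.rel_of_not_rel huv.symm hvu
    · simpa using hT.irrefl v
  exact (Finset.card_lt_card hsub).not_ge (hmax u)

theorem exists_isKing_rel [Finite V] (hT : IsTournament r) {v : V} (hv : ∃ u, r u v) :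
    ∃ k, IsKing r k ∧ r k v := by
  obtain ⟨u, huv⟩ := hv
  have : Nonempty {w // r w v} := ⟨⟨u, huv⟩⟩
  obtain ⟨⟨k, hkv⟩, hk⟩ := (hT.comap (f := fun w : {w // r w v} => (w : V))
    Subtype.val_injective).exists_isKing
  refine ⟨k, fun w hwk => ?_, hkv⟩
  by_cases hwv : r w v
  · rcases hk ⟨w, hwv⟩ (by simpa using hwk) with h | ⟨⟨x, _⟩, hkx, hxw⟩
    · exact .inl h
    · exact .inr ⟨x, hkx, hxw⟩
  · by_cases hw : w = v
    · exact hw ▸ .inl hkv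
    · exact .inr ⟨v, hkv, hT.rel_of_not_rel hw hwv⟩

theorem exists_isKing_ne_of_rel [Finite V] (hT : IsTournament r) {k v : V} (hk : IsKing r k)
    (hvk : r v k) : ∃ k', IsKing r k' ∧ k' ≠ v ∧ k' ≠ k := by
  have hkv : ¬ r k v := hT.asymm hvk
  have hne : v ≠ k := by rintro rfl; exact hT.irrefl v hvk
  obtain ⟨w, -, hwv⟩ := (hk v hne).resolve_left hkv
  obtain ⟨k', hk', hk'v⟩ := hT.exists_isKing_rel ⟨w, hwv⟩
  refine ⟨k', hk', ?_, ?_⟩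
  · rintro rfl; exact hT.irrefl k' hk'v
  · rintro rfl; exact hkv hk'v

end IsTournament

theorem two_kings_implies_three {V : Type*} [Fintype V]
    (r : V → V → Prop) (hT : IsTournament r) (k1 k2 : V)
    (h1 : IsKing r k1) (h2 : IsKing r k2) (hne : k1 ≠ k2) :
    ∃ k3 : V, IsKing r k3 ∧ k3 ≠ k1 ∧ k3 ≠ k2 := by
  by_cases h12 : r k1 k2
  · exact hT.exists_isKing_ne_of_rel h2 h12
  · obtain ⟨k3, hk3, h32, h31⟩ := hT.exists_isKing_ne_of_rel h1 (hT.rel_of_not_rel hne h12)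
    exact ⟨k3, hk3, h31, h32⟩
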